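/- arXiv:2510.04403 — 2 statements merged into one kernel-verified Lean document; each statement's English description precedes it below -/
import Mathlib

section
/- In the braid group B_5, let γ be the braid word [1,2,3,4,4,3,2,3,2,4,2,1,1,1,2,1,3,2,1,3,2,3,4,3,2,4,1,3,2,4,3,4,4,3,2,4,1,3,2,4,3,4,4,3,2,4,3,4] and let α = [-2,-4,-4,-4,-3,-2,-4,-3] (where negative entries denote inverses of generators). Then α⁻¹·γ·α equals the braid word [(1,2,3,4)^10, 2,-4,2,1,3,2,3,3,3,3]. -/
/-- The Artin braid relations on `n` generators (so this presents the braid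
group on `n + 1` strands); generator `i : Fin n` corresponds to `σ_{i+1}`. -/
def braidRels (n : ℕ) : Set (FreeGroup (Fin n)) :=
  { r | (∃ i j : Fin n, (i : ℕ) + 1 = j ∧
          r = FreeGroup.of i * FreeGroup.of j * FreeGroup.of i *
              (FreeGroup.of j * FreeGroup.of i * FreeGroup.of j)⁻¹) ∨
        (∃ i j : Fin n, (i : ℕ) + 2 ≤ (j : ℕ) ∧
          r = FreeGroup.of i * FreeGroup.of j * (FreeGroup.of j * FreeGroup.of i)⁻¹) }

/-- The braid group on `n + 1` strands, with `n` Artin generators. -/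
def BraidGroup (n : ℕ) : Type := PresentedGroup (braidRels n)

instance (n : ℕ) : Group (BraidGroup n) :=
  inferInstanceAs (Group (PresentedGroup (braidRels n)))

/-- The Artin generator `σ_{i+1}` of the braid group on `n + 1` strands. -/
def braidGen {n : ℕ} (i : Fin n) : BraidGroup n := PresentedGroup.of i

/-- The letter of a braid word: a nonzero integer `a` denotes
`σ_{|a|}^{sign a}`. (Out-of-range letters give `1`.) -/
noncomputable def braidLetter (n : ℕ) (a : ℤ) : BraidGroup n :=
  if h : a.natAbs - 1 < n then
    (braidGen (⟨a.natAbs - 1, h⟩ : Fin n)) ^ (if 0 < a then (1 : ℤ) else -1)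
  else 1

/-- The element of the braid group represented by a braid word. -/
noncomputable def braidWord (n : ℕ) (w : List ℤ) : BraidGroup n :=
  (w.map (braidLetter n)).prod

/-!
Dehornoy's handle reduction: a `σ_i`-handle is a subword `σ_i^e u σ_i^{-e}` in which `u` contains
no `σ_i^{±1}` and no `σ_{i-1}^{±1}`; the braid relations give
`σ_i^e σ_{i+1}^d σ_i^{-e} = σ_{i+1}^{-e} σ_i^d σ_{i+1}^e` while `σ_i` commutes with every other
letter of `u`, so the handle may be replaced by the letterwise conjugate of `u` without changing
the braid. Repeatedly reducing the first handle to close turns `α⁻¹ γ α δ⁻¹`, with `δ` the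
right-hand side, into the empty word after 139 steps, which the kernel checks by evaluation.
-/

section BraidRelation

variable {G : Type*} [Group G] {a b : G}

theorem SemiconjBy.of_braid (h : a * b * a = b * a * b) : SemiconjBy a b (b⁻¹ * a * b) := by
  calc a * b = b⁻¹ * (b * a * b) := by group
    _ = b⁻¹ * a * b * a := by rw [← h]; group

theorem SemiconjBy.of_braid' (h : a * b * a = b * a * b) : SemiconjBy a (b * a * b⁻¹) b := by
  calc a * (b * a * b⁻¹) = a * b * a * b⁻¹ := by group
    _ = b * a := by rw [h]; group

end BraidRelation

namespace BraidGroup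

variable {n : ℕ}

theorem braidGen_mul_braidGen_mul_braidGen {i j : Fin n} (h : (i : ℕ) + 1 = j) :
    braidGen i * braidGen j * braidGen i = braidGen j * braidGen i * braidGen j :=
  PresentedGroup.mk_eq_mk_of_mul_inv_mem (Or.inl ⟨i, j, h, rfl⟩)

theorem commute_braidGen {i j : Fin n} (h : (i : ℕ) + 2 ≤ j) :
    Commute (braidGen i) (braidGen j) :=
  PresentedGroup.mk_eq_mk_of_mul_inv_mem (Or.inr ⟨i, j, h, rfl⟩)

def ofWord (w : List (Fin n × Bool)) : BraidGroup n :=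
  PresentedGroup.mk (braidRels n) (FreeGroup.mk w)

@[simp]
theorem ofWord_nil : ofWord ([] : List (Fin n × Bool)) = 1 := rfl

theorem ofWord_append (u v : List (Fin n × Bool)) : ofWord (u ++ v) = ofWord u * ofWord v := by
  rw [ofWord, ← FreeGroup.mul_mk, map_mul]
  rfl

theorem ofWord_cons (x : Fin n × Bool) (w : List (Fin n × Bool)) :
    ofWord (x :: w) = ofWord [x] * ofWord w :=
  ofWord_append [x] w

theorem ofWord_invRev (w : List (Fin n × Bool)) : ofWord (FreeGroup.invRev w) = (ofWord w)⁻¹ := by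
  rw [ofWord, ← FreeGroup.inv_mk, map_inv]
  rfl

@[simp]
theorem ofWord_singleton_true (i : Fin n) : ofWord [(i, true)] = braidGen i := rfl

@[simp]
theorem ofWord_singleton_false (i : Fin n) : ofWord [(i, false)] = (braidGen i)⁻¹ := by
  rw [← ofWord_singleton_true, ← ofWord_invRev]
  rfl

/-- Agrees with `braidLetter` on all of `ℤ`, including its junk values at `0` and out of range. -/
def letterOfInt (n : ℕ) (a : ℤ) : Option (Fin n × Bool) :=
  if h : a.natAbs - 1 < n then some (⟨a.natAbs - 1, h⟩, decide (0 < a)) else none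

theorem braidLetter_eq_ofWord (a : ℤ) : braidLetter n a = ofWord (letterOfInt n a).toList := by
  unfold braidLetter letterOfInt
  split_ifs with hn hpos <;> simp [*]

theorem braidWord_eq_ofWord (w : List ℤ) :
    braidWord n w = ofWord (w.filterMap (letterOfInt n)) := by
  induction w with
  | nil => rfl
  | cons a w ih =>
    rw [braidWord, List.map_cons, List.prod_cons, ← braidWord, ih, braidLetter_eq_ofWord,
      List.filterMap_cons]
    cases letterOfInt n a <;> simp [ofWord_cons _ (List.filterMap _ _)]

/-- A word for `σ_i^e x σ_i^{-e}` when `x` is neither `σ_i^{±1}` nor `σ_{i-1}^{±1}`. -/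
def conjLetter (i : Fin n) (e : Bool) (x : Fin n × Bool) : List (Fin n × Bool) :=
  if (x.1 : ℕ) = i + 1 then [(x.1, !e), (i, x.2), (x.1, e)] else [x]

theorem semiconjBy_ofWord_conjLetter {i : Fin n} (e : Bool) {x : Fin n × Bool} (hx : x.1 ≠ i)
    (hx' : (x.1 : ℕ) + 1 ≠ i) :
    SemiconjBy (ofWord [(i, e)]) (ofWord [x]) (ofWord (conjLetter i e x)) := by
  obtain ⟨j, d⟩ := x
  dsimp only at hx hx'
  simp only [conjLetter]
  split_ifs with hj
  · have h := braidGen_mul_braidGen_mul_braidGen hj.symm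
    rw [ofWord_cons _ [_, _], ofWord_cons _ [_]]
    cases e <;> cases d <;>
      simp only [ofWord_singleton_true, ofWord_singleton_false, Bool.not_true, Bool.not_false]
    · simpa [mul_assoc] using (SemiconjBy.of_braid' h).inv_symm_left.inv_right
    · simpa [mul_assoc] using (SemiconjBy.of_braid' h).inv_symm_left
    · simpa [mul_assoc] using (SemiconjBy.of_braid h).inv_right
    · simpa [mul_assoc] using SemiconjBy.of_braid h
  · have hc : Commute (braidGen i) (braidGen j) := by
      rcases Nat.lt_or_gt_of_ne (Fin.val_ne_of_ne hx) with hlt | hgt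
      · exact (commute_braidGen (by omega)).symm
      · exact commute_braidGen (by omega)
    change Commute _ _
    cases e <;> cases d <;> simpa using hc

theorem semiconjBy_ofWord_flatMap_conjLetter (i : Fin n) (e : Bool) {u : List (Fin n × Bool)}
    (hu : ∀ x ∈ u, x.1 ≠ i ∧ (x.1 : ℕ) + 1 ≠ i) :
    SemiconjBy (ofWord [(i, e)]) (ofWord u) (ofWord (u.flatMap (conjLetter i e))) := by
  induction u with
  | nil => exact SemiconjBy.one_right _
  | cons x u ih =>
    obtain ⟨hx, hu⟩ := List.forall_mem_cons.mp hu
    rw [ofWord_cons, List.flatMap_cons, ofWord_append]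
    exact (semiconjBy_ofWord_conjLetter e hx.1 hx.2).mul_right (ih hu)

theorem ofWord_handle (i : Fin n) (e : Bool) {u : List (Fin n × Bool)}
    (hu : ∀ x ∈ u, x.1 ≠ i ∧ (x.1 : ℕ) + 1 ≠ i) :
    ofWord ((i, e) :: u ++ [(i, !e)]) = ofWord (u.flatMap (conjLetter i e)) := by
  have hinv : ofWord [(i, e)] * ofWord [(i, !e)] = 1 := by cases e <;> simp
  rw [List.cons_append, ofWord_cons, ofWord_append, ← mul_assoc,
    semiconjBy_ofWord_flatMap_conjLetter i e hu, mul_assoc, hinv, mul_one]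

/-- With `acc` the word read so far, reversed, find the letter opening a handle closed by `x`. -/
def handleOpening? (x : Fin n × Bool) :
    List (Fin n × Bool) → Option (List (Fin n × Bool) × List (Fin n × Bool))
  | [] => none
  | y :: acc =>
    if y.1 = x.1 then if y.2 = x.2 then none else some ([], acc)
    else if (y.1 : ℕ) + 1 = x.1 then none
    else (handleOpening? x acc).map fun p => (y :: p.1, p.2)

theorem handleOpening?_spec {x : Fin n × Bool} {acc v rest : List (Fin n × Bool)}
    (h : handleOpening? x acc = some (v, rest)) :
    acc = v ++ (x.1, !x.2) :: rest ∧ ∀ y ∈ v, y.1 ≠ x.1 ∧ (y.1 : ℕ) + 1 ≠ x.1 := by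
  induction acc generalizing v with
  | nil => simp [handleOpening?] at h
  | cons y acc ih =>
    simp only [handleOpening?] at h
    split_ifs at h with h1 h2 h3
    · cases h
      have hy : y = (x.1, !x.2) := Prod.ext h1 (Bool.eq_not_of_ne h2)
      simp [hy]
    · obtain ⟨⟨v', rest'⟩, h', hv⟩ := Option.map_eq_some_iff.mp h
      cases hv
      obtain ⟨rfl, hv'⟩ := ih h'
      exact ⟨rfl, List.forall_mem_cons.mpr ⟨⟨h1, h3⟩, hv'⟩⟩

def reduceHandle? : List (Fin n × Bool) → List (Fin n × Bool) → Option (List (Fin n × Bool))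
  | _, [] => none
  | acc, x :: w =>
    match handleOpening? x acc with
    | some (v, rest) => some (rest.reverse ++ v.reverse.flatMap (conjLetter x.1 (!x.2)) ++ w)
    | none => reduceHandle? (x :: acc) w

theorem ofWord_of_reduceHandle?_eq_some {acc w w' : List (Fin n × Bool)}
    (h : reduceHandle? acc w = some w') : ofWord w' = ofWord (acc.reverse ++ w) := by
  induction w generalizing acc with
  | nil => simp [reduceHandle?] at h
  | cons x w ih =>
    unfold reduceHandle? at h
    split at h
    next v rest hopen =>
      cases h
      obtain ⟨rfl, hv⟩ := handleOpening?_spec hopen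
      have hhandle := ofWord_handle x.1 (!x.2) (u := v.reverse) (by simpa using hv)
      rw [Bool.not_not, Prod.mk.eta] at hhandle
      have hword : (v ++ (x.1, !x.2) :: rest).reverse ++ x :: w =
          rest.reverse ++ ((x.1, !x.2) :: v.reverse ++ [x]) ++ w := by
        simp
      rw [hword, ofWord_append _ w, ofWord_append _ w, ofWord_append rest.reverse,
        ofWord_append rest.reverse, hhandle]
    next => simpa using ih h

def handleReduce : ℕ → List (Fin n × Bool) → List (Fin n × Bool)
  | 0, w => w
  | k + 1, w =>
    match reduceHandle? [] w with
    | some w' => handleReduce k w'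
    | none => w

theorem ofWord_handleReduce (k : ℕ) (w : List (Fin n × Bool)) :
    ofWord (handleReduce k w) = ofWord w := by
  induction k generalizing w with
  | zero => rfl
  | succ k ih =>
    unfold handleReduce
    split
    next w' h => rw [ih, ofWord_of_reduceHandle?_eq_some h, List.reverse_nil, List.nil_append]
    next => rfl

theorem ofWord_eq_of_handleReduce_eq_nil {u v : List (Fin n × Bool)} (k : ℕ)
    (h : handleReduce k (u ++ FreeGroup.invRev v) = []) : ofWord u = ofWord v := by
  rw [← mul_inv_eq_one, ← ofWord_invRev, ← ofWord_append, ← ofWord_handleReduce k, h, ofWord_nil]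

end BraidGroup

theorem stmt2
    (γ α : BraidGroup 4)
    (hγ : γ = braidWord 4
      [1, 2, 3, 4, 4, 3, 2, 3, 2, 4, 2, 1, 1, 1, 2, 1, 3, 2, 1, 3, 2, 3, 4, 3, 2, 4, 1, 3, 2,
      4, 3, 4, 4, 3, 2, 4, 1, 3, 2, 4, 3, 4, 4, 3, 2, 4, 3, 4])
    (hα : α = braidWord 4
      [-2, -4, -4, -4, -3, -2, -4, -3]) :
    α⁻¹ * γ * α = braidWord 4
      [1, 2, 3, 4, 1, 2, 3, 4, 1, 2, 3, 4, 1, 2, 3, 4, 1, 2, 3, 4, 1, 2, 3, 4, 1, 2, 3, 4, 1,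
      2, 3, 4, 1, 2, 3, 4, 1, 2, 3, 4, 2, -4, 2, 1, 3, 2, 3, 3, 3, 3] := by
  subst hγ hα
  simp only [BraidGroup.braidWord_eq_ofWord, ← BraidGroup.ofWord_invRev, ← BraidGroup.ofWord_append]
  exact BraidGroup.ofWord_eq_of_handleReduce_eq_nil 139 (by decide)
end

section
/- In the braid group B_6, let β = [(1,2,3,4,5)^6, 4,3,2,1, (1,2,3,4,5)^2, 5,1,2,3,4,5,5,4,3] and α = [4,1,3,2,1,-5,-4,2,1,2]. Then α⁻¹·β·α = [(1,2,3,4,5)^12, -4,-3,-2,-5,-4,-3,1,2,-5,-5,-4]. -/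
variable {n : ℕ}

theorem braidGen_braid {i j : Fin n} (h : (i : ℕ) + 1 = j) :
    braidGen i * braidGen j * braidGen i = braidGen j * braidGen i * braidGen j :=
  PresentedGroup.mk_eq_mk_of_mul_inv_mem (Or.inl ⟨i, j, h, rfl⟩)

theorem braidGen_commute {i j : Fin n} (h : (i : ℕ) + 2 ≤ j) :
    Commute (braidGen i) (braidGen j) :=
  PresentedGroup.mk_eq_mk_of_mul_inv_mem (Or.inr ⟨i, j, h, rfl⟩)

theorem braidLetter_neg {a : ℤ} (ha : a ≠ 0) : braidLetter n (-a) = (braidLetter n a)⁻¹ := by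
  unfold braidLetter
  rw [Int.natAbs_neg]
  split_ifs <;> first | omega | simp

theorem braidLetter_of_pos {a : ℤ} (ha : 0 < a) :
    braidLetter n a = if h : a.natAbs - 1 < n then braidGen ⟨a.natAbs - 1, h⟩ else 1 := by
  simp [braidLetter, ha]

theorem braidLetter_braid {a b : ℤ} (ha : 0 < a) (h : a + 1 = b) (hb : b ≤ (n : ℤ)) :
    braidLetter n a * braidLetter n b * braidLetter n a =
      braidLetter n b * braidLetter n a * braidLetter n b := by
  rw [braidLetter_of_pos ha, braidLetter_of_pos (by omega : 0 < b)]
  split_ifs with ha' hb'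
  · exact braidGen_braid (by simp; omega)
  all_goals omega

theorem braidLetter_commute {a b : ℤ} (ha : 0 < a) (h : a + 2 ≤ b) :
    Commute (braidLetter n a) (braidLetter n b) := by
  rw [braidLetter_of_pos ha, braidLetter_of_pos (by omega : 0 < b)]
  split_ifs with ha' hb'
  · exact braidGen_commute (by simp; omega)
  · exact Commute.one_right _
  · omega
  · exact Commute.one_right _

theorem inv_mul_eq_of_braid {G : Type*} [Group G] {x y : G} (h : x * y * x = y * x * y) :
    x⁻¹ * y = y * x * y⁻¹ * x⁻¹ := by
  rw [inv_mul_eq_iff_eq_mul, ← mul_assoc, ← mul_assoc, ← mul_assoc, h]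
  group

theorem braidWord_nil : braidWord n [] = 1 := rfl

theorem braidWord_cons (a : ℤ) (l : List ℤ) :
    braidWord n (a :: l) = braidLetter n a * braidWord n l := by
  simp [braidWord]

theorem braidWord_append (l₁ l₂ : List ℤ) :
    braidWord n (l₁ ++ l₂) = braidWord n l₁ * braidWord n l₂ := by
  simp [braidWord]

def invWord (l : List ℤ) : List ℤ := (l.map Neg.neg).reverse

theorem braidWord_invWord {l : List ℤ} (hl : ∀ a ∈ l, a ≠ 0) :
    braidWord n (invWord l) = (braidWord n l)⁻¹ := by
  simp only [invWord, braidWord, List.prod_inv_reverse, List.map_reverse, List.map_map]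
  congr 2
  exact List.map_congr_left fun a ha => braidLetter_neg (hl a ha)

def reverseStep (n : ℕ) : List ℤ → List ℤ
  | [] => []
  | [a] => [a]
  | a :: b :: t =>
    if a < 0 ∧ 0 < b ∧ -a ≤ n ∧ b ≤ n then
      if -a = b then t
      else if b + 2 ≤ -a ∨ -a + 2 ≤ b then b :: a :: t
      else b :: -a :: -b :: a :: t
    else a :: reverseStep n (b :: t)

theorem braidWord_reverseStep : ∀ l : List ℤ, braidWord n (reverseStep n l) = braidWord n l
  | [] | [_] => rfl
  | a :: b :: t => by
    obtain ⟨c, rfl⟩ : ∃ c, a = -c := ⟨-a, (neg_neg a).symm⟩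
    rw [reverseStep]
    split_ifs with hcb hcancel hfar
    · obtain ⟨-, hb, -, -⟩ := hcb
      obtain rfl : c = b := by omega
      rw [braidWord_cons, braidWord_cons, ← mul_assoc, braidLetter_neg hb.ne', inv_mul_cancel,
        one_mul]
    · obtain ⟨hc, hb, -, -⟩ := hcb
      have hcomm : Commute (braidLetter n c) (braidLetter n b) := by
        rcases hfar with hfar | hfar
        · exact (braidLetter_commute hb (by omega)).symm
        · exact braidLetter_commute (by omega) (by omega)
      simp only [braidWord_cons, ← mul_assoc, braidLetter_neg (by omega : c ≠ 0)]
      rw [hcomm.inv_left.eq]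
    · obtain ⟨hc, hb, hcn, hbn⟩ := hcb
      have hbraid : braidLetter n c * braidLetter n b * braidLetter n c =
          braidLetter n b * braidLetter n c * braidLetter n b := by
        rcases (by omega : c = b + 1 ∨ b = c + 1) with h | h
        · exact (braidLetter_braid hb h.symm (by omega)).symm
        · exact braidLetter_braid (by omega) h.symm hbn
      simp only [braidWord_cons, ← mul_assoc, neg_neg, braidLetter_neg (by omega : c ≠ 0),
        braidLetter_neg (by omega : b ≠ 0)]
      rw [inv_mul_eq_of_braid hbraid]
    · rw [braidWord_cons, braidWord_cons, braidWord_reverseStep (b :: t)]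

theorem braidWord_iterate_reverseStep (k : ℕ) (l : List ℤ) :
    braidWord n ((reverseStep n)^[k] l) = braidWord n l := by
  induction k generalizing l with
  | zero => rfl
  | succ k ih => rw [Function.iterate_succ_apply, ih, braidWord_reverseStep]

/-- Splitting the reversed word as `r = p q⁻¹` with `p` positive, `r` is trivial iff its rotation
`q⁻¹ p` is, iff `p⁻¹ q` is; and that word is reversed in turn. -/
def reversingCertifiesOne (n fuel : ℕ) (w : List ℤ) : Bool :=
  let r := (reverseStep n)^[fuel] w
  r.all (· ≠ 0) &&
    (reverseStep n)^[fuel] (invWord (r.dropWhile (0 < ·) ++ r.takeWhile (0 < ·))) == []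

theorem braidWord_eq_one_of_reversingCertifiesOne {fuel : ℕ} {w : List ℤ}
    (h : reversingCertifiesOne n fuel w = true) : braidWord n w = 1 := by
  simp only [reversingCertifiesOne, Bool.and_eq_true, List.all_eq_true, decide_eq_true_eq,
    beq_iff_eq] at h
  obtain ⟨hne, hrev⟩ := h
  rw [← braidWord_iterate_reverseStep fuel]
  set r := (reverseStep n)^[fuel] w
  set p := r.takeWhile (0 < ·)
  set q := r.dropWhile (0 < ·)
  have hr : p ++ q = r := List.takeWhile_append_dropWhile
  have hqp : braidWord n (q ++ p) = 1 := by
    rw [← inv_eq_one, ← braidWord_invWord, ← braidWord_iterate_reverseStep fuel, hrev,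
      braidWord_nil]
    intro a ha
    exact hne a (hr ▸ List.mem_append.2 (List.mem_append.1 ha).symm)
  rw [← hr, braidWord_append, mul_eq_one_comm, ← braidWord_append, hqp]

theorem braidWord_eq_of_reversingCertifiesOne {fuel : ℕ} {u v : List ℤ} (hv : ∀ a ∈ v, a ≠ 0)
    (h : reversingCertifiesOne n fuel (u ++ invWord v) = true) :
    braidWord n u = braidWord n v := by
  rw [← mul_inv_eq_one, ← braidWord_invWord hv, ← braidWord_append]
  exact braidWord_eq_one_of_reversingCertifiesOne h

theorem stmt9
    (γ α : BraidGroup 5)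
    (hγ : γ = braidWord 5
      [1, 2, 3, 4, 5, 1, 2, 3, 4, 5, 1, 2, 3, 4, 5, 1, 2, 3, 4, 5, 1, 2, 3, 4, 5, 1, 2, 3, 4,
      5, 4, 3, 2, 1, 1, 2, 3, 4, 5, 1, 2, 3, 4, 5, 5, 1, 2, 3, 4, 5, 5, 4, 3])
    (hα : α = braidWord 5
      [4, 1, 3, 2, 1, -5, -4, 2, 1, 2]) :
    α⁻¹ * γ * α = braidWord 5
      [1, 2, 3, 4, 5, 1, 2, 3, 4, 5, 1, 2, 3, 4, 5, 1, 2, 3, 4, 5, 1, 2, 3, 4, 5, 1, 2, 3, 4,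
      5, 1, 2, 3, 4, 5, 1, 2, 3, 4, 5, 1, 2, 3, 4, 5, 1, 2, 3, 4, 5, 1, 2, 3, 4, 5, 1, 2, 3, 4,
      5, -4, -3, -2, -5, -4, -3, 1, 2, -5, -5, -4] := by
  rw [hγ, hα, ← braidWord_invWord, ← braidWord_append, ← braidWord_append]
  · exact braidWord_eq_of_reversingCertifiesOne (fuel := 450) (by decide) (by decide +kernel)
  · decide
end
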